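/- arXiv:2007.01815 — 3 statements merged into one kernel-verified Lean document; each statement's English description precedes it below -/
import Mathlib

section
/- Let f(α) = aα + b with a ≥ 0 and g(β) = cβ + d with c ≤ 0, and suppose (a+1)(1-c) - 1 > 0. With T_α, T_β the tripoint coordinates as above, for every (α, β) ∈ ℝ² with α ≤ β, it holds that min(β - α, aα + b, cβ + d) ≤ (ad - bc)/((a+1)(1-c) - 1). -/
/-! The three constraints `m ≤ β - α`, `m ≤ aα + b`, `m ≤ cβ + d` on `m = μ(α, β)`, taken with the
nonnegative weights `-ac`, `-c`, `a`, add up to `((a+1)(1-c) - 1) m ≤ ad - bc`: these weights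
eliminate `α` and `β`, and they sum to the denominator. -/

theorem add_add_mul_min_min_le {R : Type*} [Semiring R] [LinearOrder R] [IsOrderedRing R]
    {p q r : R} (hp : 0 ≤ p) (hq : 0 ≤ q) (hr : 0 ≤ r) (x y z : R) :
    (p + q + r) * min x (min y z) ≤ p * x + q * y + r * z := by
  rw [add_mul, add_mul]
  gcongr
  · exact min_le_left _ _
  · exact (min_le_right _ _).trans (min_le_left _ _)
  · exact (min_le_right _ _).trans (min_le_right _ _)

theorem tripoint_upper_bound (a b c d : ℝ) (ha : 0 ≤ a) (hc : c ≤ 0)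
    (hK : (a + 1) * (1 - c) - 1 > 0) :
    ∀ α β : ℝ, α ≤ β →
      min (β - α) (min (a * α + b) (c * β + d))
        ≤ (a * d - b * c) / ((a + 1) * (1 - c) - 1) := by
  intro α β _
  have hac : 0 ≤ -a * c := by nlinarith
  rw [le_div_iff₀ hK, mul_comm]
  calc ((a + 1) * (1 - c) - 1) * min (β - α) (min (a * α + b) (c * β + d))
      = (-a * c + -c + a) * min (β - α) (min (a * α + b) (c * β + d)) := by ring
    _ ≤ -a * c * (β - α) + -c * (a * α + b) + a * (c * β + d) :=
        add_add_mul_min_min_le hac (neg_nonneg.mpr hc) ha _ _ _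
    _ = a * d - b * c := by ring
end

section
/- Let v, v' ∈ ℝⁿ with v'(i) ≥ 0 for all i, let η = ‖v' - v‖_∞, and let g ⊆ ℝⁿ be any set of the form of a box (product of intervals J_i). If 0 ≤ α ≤ β with β - α ≥ 2η and v + t·𝟙 ∈ g for all t ∈ [α, β] (where 𝟙 is the all-ones vector), then v' + t·𝟙 ∈ g for all t ∈ [α + η, β - η]. -/
/-! Coordinatewise, `v' i + t = v i + (t + (v' i - v i))` and `|v' i - v i| ≤ dist v v'`, so a delay
`t` taken from `v'` is a delay in `[α, β]` taken from `v`. -/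

open Set

theorem add_mem_of_forall_add_mem_Icc_of_dist_le {S : Set ℝ} {x y α β η : ℝ}
    (hxy : dist x y ≤ η) (h : ∀ s ∈ Icc α β, x + s ∈ S) :
    ∀ t ∈ Icc (α + η) (β - η), y + t ∈ S := by
  intro t ⟨htα, htβ⟩
  obtain ⟨hlo, hhi⟩ := abs_le.mp (Real.dist_eq x y ▸ hxy)
  have hshift : t + (y - x) ∈ Icc α β := ⟨by linarith, by linarith⟩
  convert h _ hshift using 1
  ring

theorem shrink_interval_general {n : ℕ} (J : Fin n → Set ℝ)
    (v v' : Fin n → ℝ) (α β : ℝ)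
    (h : ∀ t ∈ Set.Icc α β, ∀ i, v i + t ∈ J i) :
    ∀ t ∈ Set.Icc (α + dist v v') (β - dist v v'), ∀ i, v' i + t ∈ J i :=
  fun t ht i =>
    add_mem_of_forall_add_mem_Icc_of_dist_le (dist_le_pi_dist v v' i) (fun s hs => h s hs i) t ht

theorem shrink_interval {n : ℕ} (J : Fin n → Set ℝ) (hJ : ∀ i, Convex ℝ (J i))
    (v v' : Fin n → ℝ) (hv' : ∀ i, 0 ≤ v' i) (α β : ℝ)
    (hα : 0 ≤ α) (hαβ : α ≤ β) (hlen : β - α ≥ 2 * dist v v')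
    (h : ∀ t ∈ Set.Icc α β, ∀ i, v i + t ∈ J i) :
    ∀ t ∈ Set.Icc (α + dist v v') (β - dist v v'), ∀ i, v' i + t ∈ J i :=
  shrink_interval_general J v v' α β h
end

section
/- Let g ⊆ ℝⁿ be a box (product of intervals). Define ν(v) = sup { β - α : 0 ≤ α ≤ β and v + t·𝟙 ∈ g for all t ∈ [α,β] } on the set S of valuations v where some such interval exists. Then ν is 2-Lipschitz on S with respect to the sup-norm: |ν(v) - ν(v')| ≤ 2‖v - v'‖_∞ for all v, v' ∈ S. -/
/-!
Shrinking a delay interval `[α, β]` that works for `w'` to `[α + d, β - d]`, where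
`d = ‖w - w'‖_∞`, gives one that works for `w`, since `w i + t = w' i + (t + (w i - w' i))` and
`|w i - w' i| ≤ d`. So every length `l` admissible for `w'` yields the admissible length `l - 2d`
for `w` unless `l ≤ 2d`; taking suprema gives `ν(w') ≤ ν(w) + 2d`, and symmetrically.
-/

open Set

variable {ι : Type*}

/-- The set whose supremum is the paper's `ν w`, for the box `g = ∏ i, J i`. -/
def delayLengths (J : ι → Set ℝ) (w : ι → ℝ) : Set ℝ :=
  {l : ℝ | ∃ α β : ℝ, 0 ≤ α ∧ α ≤ β ∧ l = β - α ∧ ∀ t ∈ Icc α β, ∀ i, w i + t ∈ J i}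

lemma nonneg_of_mem_delayLengths {J : ι → Set ℝ} {w : ι → ℝ} {l : ℝ}
    (hl : l ∈ delayLengths J w) : 0 ≤ l := by
  obtain ⟨α, β, -, hαβ, rfl, -⟩ := hl
  linarith

lemma le_two_dist_or_sub_two_dist_mem_delayLengths [Fintype ι] {J : ι → Set ℝ} {w' : ι → ℝ}
    {l : ℝ} (hl : l ∈ delayLengths J w') (w : ι → ℝ) :
    l ≤ 2 * dist w w' ∨ l - 2 * dist w w' ∈ delayLengths J w := by
  obtain ⟨α, β, hα, -, rfl, hmem⟩ := hl
  set d := dist w w'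
  by_cases hshort : β - d < α + d
  · left; linarith
  right
  refine ⟨α + d, β - d, by positivity, not_lt.mp hshort, by ring, fun t ht i => ?_⟩
  have hi : |w i - w' i| ≤ d := by simpa only [Real.dist_eq] using dist_le_pi_dist w w' i
  obtain ⟨hi₁, hi₂⟩ := abs_le.mp hi
  rw [show w i + t = w' i + (t + (w i - w' i)) by ring]
  exact hmem _ ⟨by linarith [ht.1], by linarith [ht.2]⟩ i

lemma bddAbove_delayLengths_of_bddAbove [Fintype ι] {J : ι → Set ℝ} {w : ι → ℝ}
    (hw : BddAbove (delayLengths J w)) (w' : ι → ℝ) : BddAbove (delayLengths J w') := by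
  obtain ⟨M, hM⟩ := hw
  refine ⟨max M 0 + 2 * dist w w', fun l hl => ?_⟩
  rcases le_two_dist_or_sub_two_dist_mem_delayLengths hl w with hshort | hshrunk
  · linarith [le_max_right M 0]
  · linarith [hM hshrunk, le_max_left M 0]

lemma sSup_delayLengths_le_add_two_dist [Fintype ι] (J : ι → Set ℝ) (w w' : ι → ℝ) :
    sSup (delayLengths J w') ≤ sSup (delayLengths J w) + 2 * dist w w' := by
  have hsup : 0 ≤ sSup (delayLengths J w) :=
    Real.sSup_nonneg fun _ => nonneg_of_mem_delayLengths
  by_cases hw : BddAbove (delayLengths J w)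
  · refine Real.sSup_le (fun l hl => ?_) (by positivity)
    rcases le_two_dist_or_sub_two_dist_mem_delayLengths hl w with hshort | hshrunk
    · linarith
    · linarith [le_csSup hw hshrunk]
  · -- both sets are unbounded and `sSup` takes the junk value `0` on them
    have hw' : ¬BddAbove (delayLengths J w') :=
      fun hw' => hw (bddAbove_delayLengths_of_bddAbove hw' w)
    rw [Real.sSup_of_not_bddAbove hw, Real.sSup_of_not_bddAbove hw']
    positivity

theorem nu_lipschitz_general {n : ℕ} (J : Fin n → Set ℝ) :
    ∀ v v' : Fin n → ℝ,
      (∃ α β : ℝ, 0 ≤ α ∧ α ≤ β ∧ ∀ t ∈ Set.Icc α β, ∀ i, v i + t ∈ J i) →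
      (∃ α β : ℝ, 0 ≤ α ∧ α ≤ β ∧ ∀ t ∈ Set.Icc α β, ∀ i, v' i + t ∈ J i) →
      |sSup {l : ℝ | ∃ α β : ℝ, 0 ≤ α ∧ α ≤ β ∧ l = β - α ∧
            ∀ t ∈ Set.Icc α β, ∀ i, v i + t ∈ J i}
        - sSup {l : ℝ | ∃ α β : ℝ, 0 ≤ α ∧ α ≤ β ∧ l = β - α ∧
            ∀ t ∈ Set.Icc α β, ∀ i, v' i + t ∈ J i}|
        ≤ 2 * dist v v' := by
  intro v v' _ _
  change |sSup (delayLengths J v) - sSup (delayLengths J v')| ≤ 2 * dist v v'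
  have hle := sSup_delayLengths_le_add_two_dist J v v'
  have hge := sSup_delayLengths_le_add_two_dist J v' v
  rw [dist_comm] at hge
  exact abs_sub_le_iff.mpr ⟨by linarith, by linarith⟩

theorem nu_lipschitz {n : ℕ} (J : Fin n → Set ℝ) (hJ : ∀ i, Convex ℝ (J i)) :
    ∀ v v' : Fin n → ℝ,
      (∃ α β : ℝ, 0 ≤ α ∧ α ≤ β ∧ ∀ t ∈ Set.Icc α β, ∀ i, v i + t ∈ J i) →
      (∃ α β : ℝ, 0 ≤ α ∧ α ≤ β ∧ ∀ t ∈ Set.Icc α β, ∀ i, v' i + t ∈ J i) →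
      |sSup {l : ℝ | ∃ α β : ℝ, 0 ≤ α ∧ α ≤ β ∧ l = β - α ∧
            ∀ t ∈ Set.Icc α β, ∀ i, v i + t ∈ J i}
        - sSup {l : ℝ | ∃ α β : ℝ, 0 ≤ α ∧ α ≤ β ∧ l = β - α ∧
            ∀ t ∈ Set.Icc α β, ∀ i, v' i + t ∈ J i}|
        ≤ 2 * dist v v' :=
  nu_lipschitz_general J
end
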